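/- arXiv:2603.14340 — 3 statements merged into one kernel-verified Lean document; each statement's English description precedes it below -/
import Mathlib

section
/- Let (Ω, μ) be a measure space with 0 < μ(Ω) < ∞ and let 1 ≤ r < p < ∞ be real numbers. Let U be a nonempty set of measurable functions u : Ω → ℝ such that every u ∈ U satisfies 0 < ‖u‖_{L^r(μ)} < ∞ and 0 < ‖u‖_{L^p(μ)} < ∞, and such that c·u ∈ U whenever u ∈ U and c > 0. Let F : U → ℝ satisfy F(c·u) = c^r·F(u) for all u ∈ U and c > 0, and suppose there exist constants A, B > 0 with A·‖u‖_{L^p}^r ≤ F(u) + B·‖u‖_{L^r}^r for all u ∈ U. Then the following are equivalent: (i) there exists ε > 0 such that F(u) ≥ ε·‖u‖_{L^r}^r for all u ∈ U; (ii) there exists ε > 0 such that F(u) ≥ ε·‖u‖_{L^p}^r for all u ∈ U. -/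
open MeasureTheory

/-!
The Sobolev-type inequality turns a lower bound of `F` by `‖u‖_r^r` into one by `‖u‖_p^r`:
`ε A ‖u‖_p^r ≤ ε F + ε B ‖u‖_r^r ≤ (ε + B) F`. Conversely, on a finite measure space Hölder's
inequality gives `‖u‖_r ≤ μ(Ω)^(1/r - 1/p) ‖u‖_p`, so a lower bound by `‖u‖_p^r` yields one by
`‖u‖_r^r`.
-/

section LowerBounds

variable {α : Type*} {s : Set α} {F X Y : α → ℝ}

theorem exists_pos_mul_le_of_mul_le_add {A B : ℝ} (hA : 0 < A) (hB : 0 ≤ B)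
    (hXY : ∀ u ∈ s, A * X u ≤ F u + B * Y u) :
    (∃ ε > 0, ∀ u ∈ s, ε * Y u ≤ F u) → ∃ ε > 0, ∀ u ∈ s, ε * X u ≤ F u := by
  rintro ⟨ε, hε, hY⟩
  refine ⟨A * ε / (ε + B), by positivity, fun u hu => ?_⟩
  rw [div_mul_eq_mul_div, div_le_iff₀ (by positivity)]
  have hεX : ε * (A * X u) ≤ ε * (F u + B * Y u) := mul_le_mul_of_nonneg_left (hXY u hu) hε.le
  have hBY : B * (ε * Y u) ≤ B * F u := mul_le_mul_of_nonneg_left (hY u hu) hB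
  linarith

theorem exists_pos_mul_le_of_le_mul {C : ℝ} (hC : 0 ≤ C) (hX : ∀ u ∈ s, 0 ≤ X u)
    (hYX : ∀ u ∈ s, Y u ≤ C * X u) :
    (∃ ε > 0, ∀ u ∈ s, ε * X u ≤ F u) → ∃ ε > 0, ∀ u ∈ s, ε * Y u ≤ F u := by
  rintro ⟨ε, hε, hXF⟩
  refine ⟨ε / (C + 1), by positivity, fun u hu => ?_⟩
  calc ε / (C + 1) * Y u
      ≤ ε / (C + 1) * ((C + 1) * X u) := by
        gcongr
        linarith [hYX u hu, hX u hu]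
    _ = ε * X u := by field_simp
    _ ≤ F u := hXF u hu

end LowerBounds

theorem toReal_eLpNorm_rpow_le_mul {Ω : Type*} [MeasurableSpace Ω] {μ : Measure Ω}
    (hμ : μ Set.univ ≠ ⊤) {r p : ℝ} (hr : 0 < r) (hrp : r ≤ p) {f : Ω → ℝ}
    (hf : AEStronglyMeasurable f μ) (hfp : eLpNorm f (ENNReal.ofReal p) μ ≠ ⊤) :
    (eLpNorm f (ENNReal.ofReal r) μ).toReal ^ r ≤
      (μ Set.univ ^ (1 / r - 1 / p)).toReal ^ r * (eLpNorm f (ENNReal.ofReal p) μ).toReal ^ r := by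
  have hμpow : μ Set.univ ^ (1 / r - 1 / p) ≠ ⊤ :=
    ENNReal.rpow_ne_top_of_nonneg (sub_nonneg.2 (one_div_le_one_div_of_le hr hrp)) hμ
  have holder : (eLpNorm f (ENNReal.ofReal r) μ).toReal
      ≤ (μ Set.univ ^ (1 / r - 1 / p)).toReal * (eLpNorm f (ENNReal.ofReal p) μ).toReal := by
    rw [← ENNReal.toReal_mul, mul_comm]
    refine ENNReal.toReal_mono (ENNReal.mul_ne_top hfp hμpow) ?_
    simpa [ENNReal.toReal_ofReal hr.le, ENNReal.toReal_ofReal (hr.trans_le hrp).le] using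
      eLpNorm_le_eLpNorm_mul_rpow_measure_univ (ENNReal.ofReal_le_ofReal hrp) hf
  rw [← Real.mul_rpow ENNReal.toReal_nonneg ENNReal.toReal_nonneg]
  exact Real.rpow_le_rpow ENNReal.toReal_nonneg holder hr.le

theorem stmt_1_general {Ω : Type*} [MeasurableSpace Ω] (μ : Measure Ω)
    (hμfin : μ Set.univ ≠ ⊤)
    (r p : ℝ) (hr : 1 ≤ r) (hrp : r < p)
    (U : Set (Ω → ℝ))
    (hmeas : ∀ u ∈ U, Measurable u)
    (hLpfin : ∀ u ∈ U, eLpNorm u (ENNReal.ofReal p) μ ≠ ⊤)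
    (F : (Ω → ℝ) → ℝ)
    (A B : ℝ) (hA : 0 < A) (hB : 0 < B)
    (hSob : ∀ u ∈ U,
      A * (eLpNorm u (ENNReal.ofReal p) μ).toReal ^ r
        ≤ F u + B * (eLpNorm u (ENNReal.ofReal r) μ).toReal ^ r) :
    (∃ ε > 0, ∀ u ∈ U,
        ε * (eLpNorm u (ENNReal.ofReal r) μ).toReal ^ r ≤ F u)
    ↔ (∃ ε > 0, ∀ u ∈ U,
        ε * (eLpNorm u (ENNReal.ofReal p) μ).toReal ^ r ≤ F u) := by
  have hr0 : 0 < r := by linarith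
  have holder : ∀ u ∈ U, (eLpNorm u (ENNReal.ofReal r) μ).toReal ^ r
      ≤ (μ Set.univ ^ (1 / r - 1 / p)).toReal ^ r * (eLpNorm u (ENNReal.ofReal p) μ).toReal ^ r :=
    fun u hu => toReal_eLpNorm_rpow_le_mul hμfin hr0 hrp.le (hmeas u hu).aestronglyMeasurable
      (hLpfin u hu)
  exact ⟨exists_pos_mul_le_of_mul_le_add hA hB.le hSob,
    exists_pos_mul_le_of_le_mul (by positivity) (fun u _ => by positivity) holder⟩

/-- Lemma 5.1: positivity of the first nonlinear eigenvalue is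
equivalent to positivity of the Yamabe constant, abstract form: let `(Ω, μ)` be a
measure space with `0 < μ(Ω) < ∞`, let `1 ≤ r < p`, let `U` be a nonempty set of
measurable functions with finite positive `L^r`- and `L^p`-norms that is closed under
positive scaling, and let `F : U → ℝ` be `r`-homogeneous and satisfy the Sobolev-type
inequality `A·‖u‖_p^r ≤ F(u) + B·‖u‖_r^r`.  Then `F(u) ≥ ε·‖u‖_r^r` on `U` for some
`ε > 0` iff `F(u) ≥ ε·‖u‖_p^r` on `U` for some `ε > 0`. -/
theorem stmt_1 {Ω : Type*} [MeasurableSpace Ω] (μ : Measure Ω)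
    (hμ0 : μ Set.univ ≠ 0) (hμfin : μ Set.univ ≠ ⊤)
    (r p : ℝ) (hr : 1 ≤ r) (hrp : r < p)
    (U : Set (Ω → ℝ)) (hUne : U.Nonempty)
    (hmeas : ∀ u ∈ U, Measurable u)
    (hLr0 : ∀ u ∈ U, eLpNorm u (ENNReal.ofReal r) μ ≠ 0)
    (hLrfin : ∀ u ∈ U, eLpNorm u (ENNReal.ofReal r) μ ≠ ⊤)
    (hLp0 : ∀ u ∈ U, eLpNorm u (ENNReal.ofReal p) μ ≠ 0)
    (hLpfin : ∀ u ∈ U, eLpNorm u (ENNReal.ofReal p) μ ≠ ⊤)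
    (hscale : ∀ u ∈ U, ∀ c : ℝ, 0 < c → (c • u) ∈ U)
    (F : (Ω → ℝ) → ℝ)
    (hFscale : ∀ u ∈ U, ∀ c : ℝ, 0 < c → F (c • u) = c ^ r * F u)
    (A B : ℝ) (hA : 0 < A) (hB : 0 < B)
    (hSob : ∀ u ∈ U,
      A * (eLpNorm u (ENNReal.ofReal p) μ).toReal ^ r
        ≤ F u + B * (eLpNorm u (ENNReal.ofReal r) μ).toReal ^ r) :
    (∃ ε > 0, ∀ u ∈ U,
        ε * (eLpNorm u (ENNReal.ofReal r) μ).toReal ^ r ≤ F u)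
    ↔ (∃ ε > 0, ∀ u ∈ U,
        ε * (eLpNorm u (ENNReal.ofReal p) μ).toReal ^ r ≤ F u) :=
  stmt_1_general μ hμfin r p hr hrp U hmeas hLpfin F A B hA hB hSob
end

section
/- For every integer k ≥ 1 and every smooth f : ℝ × ℝ^{n+1} → ℝ one has, identically, Σ_{i=0}^n x^i·( t·Δ̃^k(x^i f) − x^i·Δ̃^k(t f) ) = −2k·t·X(Δ̃^{k−1} f) − 2k·Q·∂_t(Δ̃^{k−1} f). (The left-hand side equals Σ_i x^i( t[Δ̃^k, x^i]f − x^i[Δ̃^k, t]f ); since the metric gradient of t with respect to g̃ = −dt² + Σ(dx^i)² is ∇̃t = −∂_t, the right-hand side is the paper's −2k t̃ X Δ̃^{k−1} + 2k Q (∇̃t̃) Δ̃^{k−1}.) -/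
/-!
For a linear function `ℓ` the Leibniz rule gives `Δ̃(ℓ f) = ℓ Δ̃f + c ∂_v f`, with
`(c, v) = (2, ∂_t)` for `ℓ = t` and `(-2, ∂_{xⁱ})` for `ℓ = xⁱ`. As `Δ̃` has constant
coefficients it commutes with `∂_v`, so induction gives
`Δ̃^k(ℓ f) = ℓ Δ̃^k f + k c ∂_v Δ̃^{k-1} f`. Substituting both instances, the terms
`t xⁱ Δ̃^k f` cancel and what is left is `-2k (t Σᵢ xⁱ ∂_{xⁱ} + |x|² ∂_t) Δ̃^{k-1} f`,
which is the right-hand side once `X` and `Q` are expanded.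
-/

/-- The flat Fefferman–Graham ambient space `ℝ × ℝ^{n+1}` of the standard conformal
`n`-sphere, with coordinates `(t, x⁰, …, xⁿ)`. -/
abbrev Amb (n : ℕ) : Type := ℝ × (Fin (n+1) → ℝ)

/-- The partial derivative `∂_t`. -/
noncomputable def ptD {n : ℕ} (f : Amb n → ℝ) (p : Amb n) : ℝ :=
  fderiv ℝ f p (1, 0)

/-- The partial derivative `∂_{xⁱ}`. -/
noncomputable def pxD {n : ℕ} (i : Fin (n+1)) (f : Amb n → ℝ) (p : Amb n) : ℝ :=
  fderiv ℝ f p (0, Pi.single i 1)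

/-- The flat ambient Laplacian `Δ̃f = ∂_t²f − Σᵢ ∂_{xⁱ}²f` (convention `Δ ≥ 0` for the
metric `g̃ = −dt² + Σᵢ (dxⁱ)²`). -/
noncomputable def LapA {n : ℕ} (f : Amb n → ℝ) : Amb n → ℝ :=
  fun p => ptD (fun q => ptD f q) p - ∑ i, pxD i (fun q => pxD i f q) p

/-- The Euler (dilation) operator `Xf = t∂_t f + Σᵢ xⁱ∂_{xⁱ} f`. -/
noncomputable def EulerA {n : ℕ} (f : Amb n → ℝ) (p : Amb n) : ℝ :=
  p.1 * ptD f p + ∑ i, p.2 i * pxD i f p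

/-- The function `Q(t,x) = |x|² − t²`. -/
def QA {n : ℕ} (p : Amb n) : ℝ := (∑ i, (p.2 i)^2) - p.1^2

/-- The half-space `{(t,x) : t > 0}`. -/
def HS (n : ℕ) : Set (Amb n) := {p | 0 < p.1}

open scoped ContDiff

section DirDeriv

variable {E : Type*} [NormedAddCommGroup E] [NormedSpace ℝ E]

noncomputable def dirDeriv (v : E) (f : E → ℝ) : E → ℝ := fun p => fderiv ℝ f p v

variable {f g : E → ℝ}

theorem contDiff_dirDeriv (hf : ContDiff ℝ ∞ f) (v : E) : ContDiff ℝ ∞ (dirDeriv v f) :=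
  (hf.fderiv_right le_rfl).clm_apply contDiff_const

theorem dirDeriv_comm (hf : ContDiff ℝ 2 f) (v w : E) :
    dirDeriv v (dirDeriv w f) = dirDeriv w (dirDeriv v f) := by
  funext p
  have hdf : Differentiable ℝ (fderiv ℝ f) :=
    (hf.fderiv_right (m := 1) le_rfl).differentiable one_ne_zero
  have hsnd : ∀ u z, dirDeriv u (dirDeriv z f) p = fderiv ℝ (fderiv ℝ f) p u z := fun u z => by
    change fderiv ℝ (fun y => fderiv ℝ f y z) p u = _
    rw [fderiv_clm_apply (hdf p) (differentiableAt_const z)]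
    simp
  rw [hsnd, hsnd, (hf.contDiffAt.isSymmSndFDerivAt (by simp)).eq]

theorem dirDeriv_add (hf : Differentiable ℝ f) (hg : Differentiable ℝ g) (v : E) :
    dirDeriv v (fun p => f p + g p) = fun p => dirDeriv v f p + dirDeriv v g p := by
  funext p
  simp only [dirDeriv, fderiv_fun_add (hf p) (hg p), add_apply]

theorem dirDeriv_sub (hf : Differentiable ℝ f) (hg : Differentiable ℝ g) (v : E) :
    dirDeriv v (fun p => f p - g p) = fun p => dirDeriv v f p - dirDeriv v g p := by
  funext p
  simp only [dirDeriv, fderiv_fun_sub (hf p) (hg p), sub_apply]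

theorem dirDeriv_sum {ι : Type*} {s : Finset ι} {F : ι → E → ℝ}
    (hF : ∀ i ∈ s, Differentiable ℝ (F i)) (v : E) :
    dirDeriv v (fun p => ∑ i ∈ s, F i p) = fun p => ∑ i ∈ s, dirDeriv v (F i) p := by
  funext p
  simp only [dirDeriv, fderiv_fun_sum (fun i hi => hF i hi p), sum_apply]

theorem dirDeriv_const_mul (c : ℝ) (hf : Differentiable ℝ f) (v : E) :
    dirDeriv v (fun p => c * f p) = fun p => c * dirDeriv v f p := by
  funext p
  simp only [dirDeriv, fderiv_const_mul (hf p), smul_apply, smul_eq_mul]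

theorem dirDeriv_mul (hf : Differentiable ℝ f) (hg : Differentiable ℝ g) (v : E) :
    dirDeriv v (fun p => f p * g p) = fun p => dirDeriv v f p * g p + f p * dirDeriv v g p := by
  funext p
  simp only [dirDeriv, fderiv_fun_mul (hf p) (hg p), add_apply, smul_apply, smul_eq_mul]
  ring

theorem dirDeriv_clm (ℓ : E →L[ℝ] ℝ) (v : E) : dirDeriv v ℓ = fun _ => ℓ v := by
  funext p
  simp [dirDeriv]

theorem dirDeriv_dirDeriv_clm_mul (ℓ : E →L[ℝ] ℝ) (hf : ContDiff ℝ ∞ f) (w : E) :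
    dirDeriv w (dirDeriv w (fun p => ℓ p * f p))
      = fun p => ℓ p * dirDeriv w (dirDeriv w f) p + 2 * ℓ w * dirDeriv w f p := by
  have hf₁ : Differentiable ℝ f := hf.differentiable (by simp)
  have hf₂ : Differentiable ℝ (dirDeriv w f) := (contDiff_dirDeriv hf w).differentiable (by simp)
  rw [dirDeriv_mul ℓ.differentiable hf₁, dirDeriv_clm]
  beta_reduce
  rw [dirDeriv_add (f := fun p => ℓ w * f p) (g := fun p => ℓ p * dirDeriv w f p)
      (hf₁.const_mul _) (ℓ.differentiable.mul hf₂),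
    dirDeriv_const_mul _ hf₁, dirDeriv_mul ℓ.differentiable hf₂, dirDeriv_clm]
  funext p
  ring

end DirDeriv

section Laplacian

variable {n : ℕ} {f g : Amb n → ℝ}

theorem LapA_eq_dirDeriv (f : Amb n → ℝ) :
    LapA f = fun p => dirDeriv (1, 0) (dirDeriv (1, 0) f) p
      - ∑ i, dirDeriv (0, Pi.single i 1) (dirDeriv (0, Pi.single i 1) f) p :=
  rfl

theorem contDiff_LapA (hf : ContDiff ℝ ∞ f) : ContDiff ℝ ∞ (LapA f) := by
  rw [LapA_eq_dirDeriv]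
  exact (contDiff_dirDeriv (contDiff_dirDeriv hf _) _).sub
    (ContDiff.sum fun i _ => contDiff_dirDeriv (contDiff_dirDeriv hf _) _)

theorem contDiff_LapA_iterate (hf : ContDiff ℝ ∞ f) (k : ℕ) : ContDiff ℝ ∞ (LapA^[k] f) := by
  induction k with
  | zero => exact hf
  | succ k ih => rw [Function.iterate_succ_apply']; exact contDiff_LapA ih

theorem LapA_add (hf : ContDiff ℝ ∞ f) (hg : ContDiff ℝ ∞ g) :
    LapA (fun p => f p + g p) = fun p => LapA f p + LapA g p := by
  have hdd : ∀ v : Amb n, dirDeriv v (dirDeriv v (fun p => f p + g p))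
      = fun p => dirDeriv v (dirDeriv v f) p + dirDeriv v (dirDeriv v g) p := fun v => by
    rw [dirDeriv_add (hf.differentiable (by simp)) (hg.differentiable (by simp)),
      dirDeriv_add ((contDiff_dirDeriv hf v).differentiable (by simp))
        ((contDiff_dirDeriv hg v).differentiable (by simp))]
  simp only [LapA_eq_dirDeriv, hdd, Finset.sum_add_distrib]
  funext p
  ring

theorem LapA_const_mul (c : ℝ) (hf : ContDiff ℝ ∞ f) :
    LapA (fun p => c * f p) = fun p => c * LapA f p := by
  have hdd : ∀ v : Amb n, dirDeriv v (dirDeriv v (fun p => c * f p))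
      = fun p => c * dirDeriv v (dirDeriv v f) p := fun v => by
    rw [dirDeriv_const_mul c (hf.differentiable (by simp)),
      dirDeriv_const_mul c ((contDiff_dirDeriv hf v).differentiable (by simp))]
  simp only [LapA_eq_dirDeriv, hdd, ← Finset.mul_sum]
  funext p
  ring

theorem dirDeriv_LapA (hf : ContDiff ℝ ∞ f) (v : Amb n) :
    dirDeriv v (LapA f) = LapA (dirDeriv v f) := by
  have hswap : ∀ w : Amb n, dirDeriv v (dirDeriv w (dirDeriv w f))
      = dirDeriv w (dirDeriv w (dirDeriv v f)) := fun w => by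
    rw [dirDeriv_comm ((contDiff_dirDeriv hf w).of_le (by norm_cast)),
      dirDeriv_comm (hf.of_le (by norm_cast)) v w]
  have hdd : ∀ w : Amb n, Differentiable ℝ (dirDeriv w (dirDeriv w f)) := fun w =>
    (contDiff_dirDeriv (contDiff_dirDeriv hf w) w).differentiable (by simp)
  rw [LapA_eq_dirDeriv, LapA_eq_dirDeriv,
    dirDeriv_sub (hdd _) (Differentiable.fun_sum fun i _ => hdd _),
    dirDeriv_sum fun i _ => hdd _]
  simp only [hswap]

end Laplacian

section Commutator

variable {n : ℕ} {f : Amb n → ℝ}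

theorem LapA_clm_mul (ℓ : Amb n →L[ℝ] ℝ) (hf : ContDiff ℝ ∞ f) :
    LapA (fun p => ℓ p * f p) = fun p => ℓ p * LapA f p
      + 2 * (ℓ (1, 0) * dirDeriv (1, 0) f p
        - ∑ i, ℓ (0, Pi.single i 1) * dirDeriv (0, Pi.single i 1) f p) := by
  simp only [LapA_eq_dirDeriv, dirDeriv_dirDeriv_clm_mul ℓ hf, Finset.sum_add_distrib]
  funext p
  simp only [mul_sub, Finset.mul_sum, mul_assoc]
  ring

theorem LapA_fst_mul (hf : ContDiff ℝ ∞ f) :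
    LapA (fun p => p.1 * f p) = fun p => p.1 * LapA f p + 2 * dirDeriv (1, 0) f p := by
  simpa using LapA_clm_mul (ContinuousLinearMap.fst ℝ ℝ (Fin (n + 1) → ℝ)) hf

theorem LapA_coord_mul (j : Fin (n + 1)) (hf : ContDiff ℝ ∞ f) :
    LapA (fun p => p.2 j * f p)
      = fun p => p.2 j * LapA f p + -2 * dirDeriv (0, Pi.single j 1) f p := by
  simpa [Pi.single_apply] using
    LapA_clm_mul ((ContinuousLinearMap.proj j).comp (ContinuousLinearMap.snd ℝ ℝ _)) hf

theorem LapA_iterate_mul {ℓ : Amb n → ℝ} (hℓ : ContDiff ℝ ∞ ℓ) (c : ℝ) (v : Amb n)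
    (hleib : ∀ g : Amb n → ℝ, ContDiff ℝ ∞ g →
      LapA (fun p => ℓ p * g p) = fun p => ℓ p * LapA g p + c * dirDeriv v g p)
    (hf : ContDiff ℝ ∞ f) (k : ℕ) :
    LapA^[k + 1] (fun p => ℓ p * f p)
      = fun p => ℓ p * LapA^[k + 1] f p + (k + 1) * c * dirDeriv v (LapA^[k] f) p := by
  induction k with
  | zero => simpa using hleib f hf
  | succ k ih =>
    have hg := contDiff_LapA_iterate hf (k + 1)
    have hh := contDiff_dirDeriv (contDiff_LapA_iterate hf k) v
    rw [Function.iterate_succ_apply', ih, LapA_add (hℓ.mul hg) (contDiff_const.mul hh),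
      hleib _ hg, LapA_const_mul _ hh, ← dirDeriv_LapA (contDiff_LapA_iterate hf k),
      ← Function.iterate_succ_apply' LapA k f, ← Function.iterate_succ_apply' LapA (k + 1) f]
    funext p
    push_cast
    ring

end Commutator

theorem stmt_2_general (n k : ℕ) (hk : 1 ≤ k)
    (f : Amb n → ℝ) (hf : ContDiff ℝ (⊤ : ℕ∞) f) (p : Amb n) :
    ∑ i, p.2 i * (p.1 * LapA^[k] (fun q => q.2 i * f q) p
        - p.2 i * LapA^[k] (fun q => q.1 * f q) p)
      = -(2*(k:ℝ)) * p.1 * EulerA (LapA^[k-1] f) p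
        - 2*(k:ℝ) * QA p * ptD (LapA^[k-1] f) p := by
  obtain ⟨m, rfl⟩ : ∃ m, k = m + 1 := ⟨k - 1, by omega⟩
  have hfst := congrFun (LapA_iterate_mul contDiff_fst 2 _ (fun _ => LapA_fst_mul) hf m) p
  have hcoord : ∀ i, LapA^[m + 1] (fun q => q.2 i * f q) p
      = p.2 i * LapA^[m + 1] f p + (m + 1) * -2 * pxD i (LapA^[m] f) p := fun i =>
    congrFun (LapA_iterate_mul ((contDiff_apply ℝ ℝ i).comp contDiff_snd) (-2) _
      (fun _ => LapA_coord_mul i) hf m) p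
  have hsummand : ∀ i, p.2 i * (p.1 * LapA^[m + 1] (fun q => q.2 i * f q) p
      - p.2 i * LapA^[m + 1] (fun q => q.1 * f q) p)
      = -(2 * (m + 1)) * p.1 * (p.2 i * pxD i (LapA^[m] f) p)
        - 2 * (m + 1) * ptD (LapA^[m] f) p * p.2 i ^ 2 := fun i => by
    rw [hcoord, hfst]
    unfold ptD dirDeriv
    ring
  rw [Finset.sum_congr rfl fun i _ => hsummand i, Finset.sum_sub_distrib, ← Finset.mul_sum,
    ← Finset.mul_sum, Nat.add_sub_cancel, EulerA, QA]
  push_cast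
  ring

/-- Lemma 6.2, eqn (6.1): for every `k ≥ 1` and smooth `f`,
`Σᵢ xⁱ(t·Δ̃^k(xⁱf) − xⁱ·Δ̃^k(tf)) = −2k·t·X(Δ̃^{k−1}f) − 2k·Q·∂_t(Δ̃^{k−1}f)`. -/
theorem stmt_2 (n k : ℕ) (hn : 1 ≤ n) (hk : 1 ≤ k)
    (f : Amb n → ℝ) (hf : ContDiff ℝ (⊤ : ℕ∞) f) (p : Amb n) :
    ∑ i, p.2 i * (p.1 * LapA^[k] (fun q => q.2 i * f q) p
        - p.2 i * LapA^[k] (fun q => q.1 * f q) p)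
      = -(2*(k:ℝ)) * p.1 * EulerA (LapA^[k-1] f) p
        - 2*(k:ℝ) * QA p * ptD (LapA^[k-1] f) p :=
  stmt_2_general n k hk f hf p
end

section
/- Let n > 2k ≥ 2 be integers and set α := (n−2k)/6. For all smooth functions u, v on an open subset of ℝ × ℝ^{n+1} one has, identically: Σ_{a+b+c=k} A_{a,b,c}·Δ̃^a((Δ̃^b u)·(Δ̃^c v)) = Σ_{a+b=k} (k!/(a!·b!))·( Γ(α+a)·Γ(α+b)² / (Γ(α)·Γ(α+k)²) )·D_{a, −(n−2k)/3, −(n−2k)/3 − 2b}[Δ̃^b u](v). -/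
/-- The ascending Pochhammer symbol `P_j(z) = z(z+1)⋯(z+j−1)`. -/
noncomputable def poch (z : ℝ) (j : ℕ) : ℝ := Polynomial.eval z (ascPochhammer ℝ j)

/-- The Case–Yan building block
`D_{m,w,w′}[f](u) = Σ_{a+b=m} C(m,a)·P_a((n−2m)/2+w)·P_b(−w−w′−(n−2m)/2)·Δ̃^a(f·Δ̃^b u)`. -/
noncomputable def CY {n : ℕ} (m : ℕ) (w w' : ℝ) (f u : Amb n → ℝ) : Amb n → ℝ :=
  fun p => ∑ ab ∈ Finset.HasAntidiagonal.antidiagonal m,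
    ((m.choose ab.1 : ℝ) * poch (((n:ℝ) - 2*(m:ℝ))/2 + w) ab.1
      * poch (-w - w' - ((n:ℝ) - 2*(m:ℝ))/2) ab.2)
    * LapA^[ab.1] (fun q => f q * LapA^[ab.2] u q) p

/-- The Ovsienko–Redou coefficient
`A_{a,b,c} = (k!/(a!b!c!))·Γ(α+a+b)·Γ(α+a+c)·Γ(α+b+c)/(Γ(α)·Γ(α+k)²)`, `α = (n−2k)/6`. -/
noncomputable def ORA (n k a b c : ℕ) : ℝ :=
  ((k.factorial : ℝ) / ((a.factorial : ℝ) * (b.factorial : ℝ) * (c.factorial : ℝ)))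
  * Real.Gamma (((n:ℝ) - 2*k)/6 + a + b)
  * Real.Gamma (((n:ℝ) - 2*k)/6 + a + c)
  * Real.Gamma (((n:ℝ) - 2*k)/6 + b + c)
  / (Real.Gamma (((n:ℝ) - 2*k)/6) * Real.Gamma (((n:ℝ) - 2*k)/6 + k)^2)

/-- The Ovsienko–Redou ambient operator `D̃_{2k}(u ⊗ v) = Σ_{a+b+c=k} A_{a,b,c}·Δ̃^a((Δ̃^b u)(Δ̃^c v))`. -/
noncomputable def ORop {n : ℕ} (k : ℕ) (u v : Amb n → ℝ) : Amb n → ℝ :=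
  fun p => ∑ abc ∈ Finset.HasAntidiagonal.antidiagonal k, ∑ bc ∈ Finset.HasAntidiagonal.antidiagonal abc.2,
    ORA n k abc.1 bc.1 bc.2
      * LapA^[abc.1] (fun q => LapA^[bc.1] u q * LapA^[bc.2] v q) p

/-! The identity is purely algebraic. Regroup the sum over `a + b + c = k` by `m = a + c`.
With `α = (n - 2k)/6`, both Pochhammer arguments of the Case–Yan block `D_{m, w, w'}` with
`w = -(n-2k)/3`, `w' = w - 2b` equal `α + b`, and `Γ(α + b + j) = (α + b)_j Γ(α + b)` splits
`A_{a,b,c}` into the outer weight at `(m, b)` times the Case–Yan coefficient at `(a, c)`. -/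

open Finset

theorem Real.Gamma_add_nat_eq_poch_mul {x : ℝ} (hx : 0 < x) (j : ℕ) :
    Real.Gamma (x + j) = poch x j * Real.Gamma x := by
  induction j with
  | zero => simp [poch]
  | succ j ih =>
    rw [Nat.cast_succ, ← add_assoc, Real.Gamma_add_one (by positivity), ih, poch, poch,
      ascPochhammer_succ_right, Polynomial.eval_mul]
    simp only [Polynomial.eval_add, Polynomial.eval_X, Polynomial.eval_natCast]
    ring

theorem Finset.Nat.sum_antidiagonal_antidiagonal_regroup {M : Type*} [AddCommMonoid M]
    (f : ℕ → ℕ → ℕ → M) (k : ℕ) :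
    ∑ x ∈ antidiagonal k, ∑ y ∈ antidiagonal x.2, f x.1 y.1 y.2
      = ∑ x ∈ antidiagonal k, ∑ y ∈ antidiagonal x.1, f y.1 x.2 y.2 := by
  rw [sum_sigma', sum_sigma']
  refine sum_nbij' (fun x => ⟨(x.1.1 + x.2.2, x.2.1), (x.1.1, x.2.2)⟩)
    (fun y => ⟨(y.2.1, y.1.2 + y.2.2), (y.1.2, y.2.2)⟩) ?_ ?_ ?_ ?_ (fun _ _ => rfl) <;>
  · rintro ⟨⟨_, _⟩, ⟨_, _⟩⟩ h
    simp only [mem_sigma, HasAntidiagonal.mem_antidiagonal, Sigma.mk.injEq, Prod.mk.injEq,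
      heq_eq_eq, and_true, true_and] at h ⊢
    omega

theorem ORA_eq_mul_CY_coeff {n k a b c m : ℕ} (hnk : 2 * k < n) (hac : a + c = m)
    (hmb : m + b = k) :
    ORA n k a b c
      = ((k.factorial : ℝ) / ((m.factorial : ℝ) * (b.factorial : ℝ)))
        * (Real.Gamma (((n:ℝ) - 2*k)/6 + m) * Real.Gamma (((n:ℝ) - 2*k)/6 + b)^2
           / (Real.Gamma (((n:ℝ) - 2*k)/6) * Real.Gamma (((n:ℝ) - 2*k)/6 + k)^2))
        * ((m.choose a : ℝ) * poch (((n:ℝ) - 2*(m:ℝ))/2 + -((n:ℝ) - 2*k)/3) a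
          * poch (-(-((n:ℝ) - 2*k)/3) - (-((n:ℝ) - 2*k)/3 - 2*b) - ((n:ℝ) - 2*(m:ℝ))/2) c) := by
  set α : ℝ := ((n:ℝ) - 2 * k) / 6 with hα_def
  have hac' : (a + c : ℝ) = m := by exact_mod_cast hac
  have hmb' : (m + b : ℝ) = k := by exact_mod_cast hmb
  have hα : 0 < α := by
    have : (2 * k : ℝ) < n := by exact_mod_cast hnk
    linarith
  have hw : ((n:ℝ) - 2 * m) / 2 + -((n:ℝ) - 2 * k) / 3 = α + b := by linarith
  have hw' : -(-((n:ℝ) - 2 * k) / 3) - (-((n:ℝ) - 2 * k) / 3 - 2 * b) - ((n:ℝ) - 2 * m) / 2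
      = α + b := by linarith
  have hβ : 0 < α + b := by positivity
  rw [hw, hw', ORA, ← hα_def, add_right_comm α (a:ℝ), add_assoc α (a:ℝ), hac',
    Real.Gamma_add_nat_eq_poch_mul hβ, Real.Gamma_add_nat_eq_poch_mul hβ, ← hac,
    Nat.cast_choose ℝ (Nat.le_add_right a c), Nat.add_sub_cancel_left]
  have := (Real.Gamma_pos_of_pos hα).ne'
  have := (Real.Gamma_pos_of_pos (by positivity : 0 < α + k)).ne'
  field_simp

theorem stmt_10_general (n k : ℕ) (hnk : 2*k < n) (u v : Amb n → ℝ) (p : Amb n) :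
    ORop k u v p
      = ∑ ab ∈ Finset.HasAntidiagonal.antidiagonal k,
          ((k.factorial : ℝ) / ((ab.1.factorial : ℝ) * (ab.2.factorial : ℝ)))
          * (Real.Gamma (((n:ℝ) - 2*k)/6 + ab.1) * Real.Gamma (((n:ℝ) - 2*k)/6 + ab.2)^2
             / (Real.Gamma (((n:ℝ) - 2*k)/6) * Real.Gamma (((n:ℝ) - 2*k)/6 + k)^2))
          * CY ab.1 (-((n:ℝ) - 2*k)/3) (-((n:ℝ) - 2*k)/3 - 2*ab.2) (LapA^[ab.2] u) v p := by
  rw [ORop, Nat.sum_antidiagonal_antidiagonal_regroup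
    (fun a b c => ORA n k a b c * LapA^[a] (fun q => LapA^[b] u q * LapA^[c] v q) p)]
  refine sum_congr rfl fun mb hmb => ?_
  rw [CY, mul_sum]
  refine sum_congr rfl fun ac hac => ?_
  rw [HasAntidiagonal.mem_antidiagonal] at hmb hac
  rw [ORA_eq_mul_CY_coeff hnk hac hmb, mul_assoc]

/-- eqn (3.5), or-to-cy: for `n > 2k ≥ 2`, `α = (n−2k)/6`, and smooth
`u, v` on an open set, `Σ_{a+b+c=k} A_{a,b,c}·Δ̃^a((Δ̃^b u)(Δ̃^c v))
 = Σ_{a+b=k} (k!/(a!b!))·(Γ(α+a)Γ(α+b)²/(Γ(α)Γ(α+k)²))·D_{a,−(n−2k)/3,−(n−2k)/3−2b}[Δ̃^b u](v)`. -/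
theorem stmt_10 (n k : ℕ) (hk : 1 ≤ k) (hnk : 2*k < n)
    (U : Set (Amb n)) (hU : IsOpen U) (u v : Amb n → ℝ)
    (hu : ContDiffOn ℝ (⊤ : ℕ∞) u U) (hv : ContDiffOn ℝ (⊤ : ℕ∞) v U)
    (p : Amb n) (hp : p ∈ U) :
    ORop k u v p
      = ∑ ab ∈ Finset.HasAntidiagonal.antidiagonal k,
          ((k.factorial : ℝ) / ((ab.1.factorial : ℝ) * (ab.2.factorial : ℝ)))
          * (Real.Gamma (((n:ℝ) - 2*k)/6 + ab.1) * Real.Gamma (((n:ℝ) - 2*k)/6 + ab.2)^2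
             / (Real.Gamma (((n:ℝ) - 2*k)/6) * Real.Gamma (((n:ℝ) - 2*k)/6 + k)^2))
          * CY ab.1 (-((n:ℝ) - 2*k)/3) (-((n:ℝ) - 2*k)/3 - 2*ab.2) (LapA^[ab.2] u) v p :=
  stmt_10_general n k hnk u v p
end
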